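/- arXiv:2409.17934 — 2 statements merged into one kernel-verified Lean document; each statement's English description precedes it below -/
import Mathlib

section
/- Let R be a commutative ring, A = (a_{ij}) an m×n matrix over R, and b_1,…,b_m, c_1,…,c_n ∈ R. Let B be the m×(n+1) matrix obtained from A by appending the column whose i-th entry is (∑_{j=1}^n c_j a_{ij}) + b_i. Then for every integer r, I_r(A) ⊆ I_r(B) ⊆ I_r(A) + (b_1,…,b_m)R. -/
noncomputable section

/-- The ideal generated by the `r`-minors of a matrix, with the conventions
`I_r(A) = R` for `r ≤ 0` and `I_r(A) = 0` when `r` exceeds the size of `A`. -/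
def minorsIdeal {R : Type} [CommRing R] {m n : ℕ} (A : Matrix (Fin m) (Fin n) R)
    (r : ℤ) : Ideal R :=
  if r < 0 then ⊤
  else Ideal.span {x | ∃ (ri : Fin r.toNat → Fin m) (ci : Fin r.toNat → Fin n),
    x = (A.submatrix ri ci).det}

lemma det_updateCol_mem_span {R : Type} [CommRing R] {k : ℕ}
    (M : Matrix (Fin k) (Fin k) R) (j : Fin k) (v : Fin k → R) :
    (M.updateCol j v).det ∈ Ideal.span (Set.range v) := by
  rw [← Matrix.cramer_apply]
  have hv : v = ∑ i, v i • (Pi.single i 1 : Fin k → R) := by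
    rw [← Finset.univ_sum_single v]
    refine Finset.sum_congr rfl fun i _ => ?_
    ext t
    simp [Pi.single_apply]
  have hc : M.cramer v j = ∑ i, v i * M.cramer (Pi.single i 1) j := by
    conv_lhs => rw [hv]
    rw [map_sum, Finset.sum_apply]
    refine Finset.sum_congr rfl fun i _ => ?_
    rw [map_smul]
    simp
  rw [hc]
  exact Ideal.sum_mem _ fun i _ =>
    Ideal.mul_mem_right _ _ (Ideal.subset_span ⟨i, rfl⟩)

/-- Let `A` be an `m × n` matrix over a commutative ring `R` and let `B` be the
`m × (n+1)` matrix obtained from `A` by appending the column with `i`-th entry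
`(∑_j c_j a_{ij}) + b_i`. Then `I_r(A) ⊆ I_r(B) ⊆ I_r(A) + (b_1, …, b_m)`
for every integer `r`. -/
theorem minorsIdeal_le_minorsIdeal_append_col_le
    (R : Type) [CommRing R] (m n : ℕ) (A : Matrix (Fin m) (Fin n) R)
    (b : Fin m → R) (c : Fin n → R) (r : ℤ) :
    minorsIdeal A r ≤
      minorsIdeal (Matrix.of fun i => Fin.snoc (A i) ((∑ j, c j * A i j) + b i)) r ∧
    minorsIdeal (Matrix.of fun i => Fin.snoc (A i) ((∑ j, c j * A i j) + b i)) r ≤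
      minorsIdeal A r ⊔ Ideal.span (Set.range b) := by
  set B : Matrix (Fin m) (Fin (n + 1)) R :=
    Matrix.of fun i => Fin.snoc (A i) ((∑ j, c j * A i j) + b i) with hB
  have hBcast : ∀ (i : Fin m) (j : Fin n), B i j.castSucc = A i j := by
    intro i j; simp [hB]
  have hBlast : ∀ i : Fin m, B i (Fin.last n) = (∑ j, c j * A i j) + b i := by
    intro i; simp [hB]
  have hBcast' : ∀ (i : Fin m) (j : Fin (n + 1)) (hj : j ≠ Fin.last n),
      B i j = A i (j.castPred hj) := by
    intro i j hj
    conv_lhs => rw [← Fin.castSucc_castPred j hj]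
    exact hBcast i _
  constructor
  · unfold minorsIdeal
    split_ifs with h
    · exact le_rfl
    · apply Ideal.span_mono
      rintro x ⟨ri, ci, rfl⟩
      refine ⟨ri, fun j => (ci j).castSucc, ?_⟩
      congr 1
      ext i j
      exact (hBcast (ri i) (ci j)).symm
  · unfold minorsIdeal
    split_ifs with h
    · exact le_sup_left
    · rw [Ideal.span_le]
      rintro x ⟨ri, ci, rfl⟩
      by_cases hlast : ∃ j₀, ci j₀ = Fin.last n
      · obtain ⟨j₀, hj₀⟩ := hlast
        by_cases huniq : ∀ j, ci j = Fin.last n → j = j₀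
        · -- exactly one "last" column
          have hMeq : B.submatrix ri ci = (B.submatrix ri ci).updateCol j₀
              (fun i => (∑ j, c j * A (ri i) j) + b (ri i)) := by
            ext i j
            rw [Matrix.updateCol_apply]
            split_ifs with hj
            · subst hj
              simp only [Matrix.submatrix_apply, hj₀]
              exact hBlast (ri i)
            · rfl
          have hsum : ((B.submatrix ri ci).updateCol j₀
                (fun i => ∑ j, c j * A (ri i) j)).det
              ∈ Ideal.span {x | ∃ (ri' : Fin r.toNat → Fin m) (ci' : Fin r.toNat → Fin n),
                  x = (A.submatrix ri' ci').det} := by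
            have hcol : (fun i => ∑ j, c j * A (ri i) j)
                = ∑ j, (c j • fun i => A (ri i) j : Fin r.toNat → R) := by
              ext i; simp
            rw [← Matrix.cramer_apply, hcol, map_sum, Finset.sum_apply]
            refine Ideal.sum_mem _ fun j _ => ?_
            rw [map_smul]
            simp only [Pi.smul_apply, smul_eq_mul]
            refine Ideal.mul_mem_left _ _ ?_
            rw [Matrix.cramer_apply]
            refine Ideal.subset_span ⟨ri, fun j' => if h' : j' = j₀ then j
              else (ci j').castPred (fun he => h' (huniq j' he)), ?_⟩
            congr 1
            ext i j'
            rw [Matrix.updateCol_apply]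
            split_ifs with hj'
            · subst hj'; simp
            · simp only [Matrix.submatrix_apply, dif_neg hj']
              exact hBcast' (ri i) (ci j') (fun he => hj' (huniq j' he))
          have hbcol : ((B.submatrix ri ci).updateCol j₀ (fun i => b (ri i))).det
              ∈ Ideal.span (Set.range b) := by
            refine Ideal.span_mono ?_
              (det_updateCol_mem_span (B.submatrix ri ci) j₀ (fun i => b (ri i)))
            rintro y ⟨i, rfl⟩
            exact ⟨ri i, rfl⟩
          have hdet : (B.submatrix ri ci).det
              = ((B.submatrix ri ci).updateCol j₀
                  (fun i => ∑ j, c j * A (ri i) j)).det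
                + ((B.submatrix ri ci).updateCol j₀ (fun i => b (ri i))).det := by
            conv_lhs => rw [hMeq]
            rw [← Matrix.det_updateCol_add]
            rfl
          rw [hdet]
          exact add_mem (Ideal.mem_sup_left hsum) (Ideal.mem_sup_right hbcol)
        · -- two equal "last" columns
          push_neg at huniq
          obtain ⟨j₁, hj₁, hne⟩ := huniq
          have hz : (B.submatrix ri ci).det = 0 := by
            refine Matrix.det_zero_of_column_eq hne fun i => ?_
            simp only [Matrix.submatrix_apply, hj₀, hj₁]
          rw [hz]; exact zero_mem _
      · push_neg at hlast
        refine Ideal.mem_sup_left (Ideal.subset_span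
          ⟨ri, fun j => (ci j).castPred (hlast j), ?_⟩)
        congr 1
        ext i j
        simp only [Matrix.submatrix_apply]
        exact hBcast' (ri i) (ci j) (hlast j)


end
end

section
/- Let R be a commutative ring and let S be either the polynomial ring R[X_1,…,X_l] or the formal power series ring R⟦X_1,…,X_l⟧. Let f_1,…,f_m, g_1,…,g_n ∈ S and suppose the ideals they generate coincide: I = (f_1,…,f_m) = (g_1,…,g_n). Then for every integer r, I_r((∂f_j/∂X_i)) + I = I_r((∂g_j/∂X_i)) + I, where (∂f_j/∂X_i) denotes the l×m Jacobian matrix of f_1,…,f_m and (∂g_j/∂X_i) the l×n Jacobian matrix of g_1,…,g_n. -/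
noncomputable section

/-- The Jacobian matrix `(∂f_j/∂X_i)` of a family of polynomials. -/
def polyJacobi {k : Type} [CommRing k] {m r : ℕ}
    (f : Fin r → MvPolynomial (Fin m) k) :
    Matrix (Fin m) (Fin r) (MvPolynomial (Fin m) k) :=
  Matrix.of fun i j => MvPolynomial.pderiv i (f j)

/-- Formal partial derivative `∂f/∂X_i` of a multivariate power series. -/
def psPderiv {k : Type} [CommRing k] {m : ℕ} (i : Fin m)
    (f : MvPowerSeries (Fin m) k) : MvPowerSeries (Fin m) k :=
  fun e => (e i + 1 : ℕ) • MvPowerSeries.coeff (R := k) (e + Finsupp.single i 1) f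

/-- The Jacobian matrix `(∂f_j/∂X_i)` of a family of power series. -/
def psJacobi {k : Type} [CommRing k] {m r : ℕ}
    (f : Fin r → MvPowerSeries (Fin m) k) :
    Matrix (Fin m) (Fin r) (MvPowerSeries (Fin m) k) :=
  Matrix.of fun i j => psPderiv i (f j)

/-!
Write `g_j = ∑_k c_{jk} f_k`. For any derivation `D`, the Leibniz rule gives
`D g_j ≡ ∑_k c_{jk} D f_k` modulo `I = (f)`, so modulo `I` the Jacobian of `g` is the Jacobian
of `f` times the matrix `(c_{jk})`. Every minor of a product `A B` is a linear combination of
minors of `A` of the same size, hence `I_r(J g) ⊆ I_r(J f) + I`; by symmetry equality holds.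
Both the polynomial and the power series partial derivatives are derivations.
-/

section Minors

variable {R S : Type} [CommRing R] [CommRing S]

theorem Ideal.map_minorsIdeal (φ : R →+* S) {m n : ℕ} (A : Matrix (Fin m) (Fin n) R)
    (r : ℤ) : (minorsIdeal A r).map φ = minorsIdeal (A.map φ) r := by
  have hdet : ∀ {k : ℕ} (ri : Fin k → Fin m) (ci : Fin k → Fin n),
      φ (A.submatrix ri ci).det = ((A.map φ).submatrix ri ci).det := fun ri ci => by
    rw [RingHom.map_det, RingHom.mapMatrix_apply, Matrix.submatrix_map]
  unfold minorsIdeal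
  split_ifs
  · exact Ideal.map_top φ
  · rw [Ideal.map_span]
    congr 1
    ext y
    constructor
    · rintro ⟨x, ⟨ri, ci, rfl⟩, rfl⟩
      exact ⟨ri, ci, hdet ri ci⟩
    · rintro ⟨ri, ci, rfl⟩
      exact ⟨_, ⟨ri, ci, rfl⟩, hdet ri ci⟩

theorem minorsIdeal_sup_eq_comap {m n : ℕ} (A : Matrix (Fin m) (Fin n) R) (I : Ideal R)
    (r : ℤ) :
    minorsIdeal A r ⊔ I =
      (minorsIdeal (A.map (Ideal.Quotient.mk I)) r).comap (Ideal.Quotient.mk I) := by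
  rw [← Ideal.map_minorsIdeal, Ideal.comap_map_of_surjective _ Ideal.Quotient.mk_surjective,
    ← RingHom.ker_eq_comap_bot, Ideal.mk_ker]

/-- The weak form of the Cauchy–Binet formula, by multilinearity of `det` in the columns. -/
theorem Matrix.det_submatrix_mul_eq_sum {k l m n : ℕ} (A : Matrix (Fin l) (Fin m) R)
    (B : Matrix (Fin m) (Fin n) R) (ri : Fin k → Fin l) (ci : Fin k → Fin n) :
    ((A * B).submatrix ri ci).det =
      ∑ u : Fin k → Fin m, (∏ p, B (u p) (ci p)) * (A.submatrix ri u).det := by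
  have hcols : ((A * B).submatrix ri ci).transpose =
      fun p => ∑ q, B q (ci p) • fun s => A (ri s) q := by
    funext p s
    simp [Matrix.mul_apply, Finset.sum_apply, mul_comm]
  rw [← Matrix.det_transpose, hcols]
  change (Matrix.detRowAlternating : (Fin k → R) [⋀^Fin k]→ₗ[R] R).toMultilinearMap _ = _
  rw [MultilinearMap.map_sum]
  refine Finset.sum_congr rfl fun u _ => ?_
  rw [MultilinearMap.map_smul_univ, smul_eq_mul, ← Matrix.det_transpose (A.submatrix ri u)]
  rfl

theorem minorsIdeal_mul_le {l m n : ℕ} (A : Matrix (Fin l) (Fin m) R)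
    (B : Matrix (Fin m) (Fin n) R) (r : ℤ) :
    minorsIdeal (A * B) r ≤ minorsIdeal A r := by
  unfold minorsIdeal
  split_ifs
  · exact le_rfl
  · rw [Ideal.span_le]
    rintro x ⟨ri, ci, rfl⟩
    rw [Matrix.det_submatrix_mul_eq_sum]
    exact Ideal.sum_mem _ fun u _ => Ideal.mul_mem_left _ _ (Ideal.subset_span ⟨ri, u, rfl⟩)

end Minors

section Jacobian

variable {R S : Type} [CommRing R] [CommRing S] [Algebra R S] {l : ℕ}

def jacobianMatrix (D : Fin l → Derivation R S S) {m : ℕ} (f : Fin m → S) :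
    Matrix (Fin l) (Fin m) S :=
  Matrix.of fun i j => D i (f j)

theorem jacobianMatrix_map_mk_eq_mul (D : Fin l → Derivation R S S) {m n : ℕ}
    (f : Fin m → S) (g : Fin n → S) (c : Fin n → Fin m → S)
    (hc : ∀ j, ∑ k, c j k * f k = g j) :
    (jacobianMatrix D g).map (Ideal.Quotient.mk (Ideal.span (Set.range f))) =
      (jacobianMatrix D f).map (Ideal.Quotient.mk (Ideal.span (Set.range f))) *
        Matrix.of fun k j => Ideal.Quotient.mk (Ideal.span (Set.range f)) (c j k) := by
  ext i j
  simp only [jacobianMatrix, Matrix.map_apply, Matrix.of_apply, Matrix.mul_apply, ← hc j,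
    map_sum, Derivation.leibniz, smul_eq_mul, map_add, map_mul,
    Ideal.Quotient.eq_zero_iff_mem.mpr (Ideal.subset_span (Set.mem_range_self _)), zero_mul,
    zero_add, mul_comm]

theorem minorsIdeal_jacobianMatrix_le_sup (D : Fin l → Derivation R S S) {m n : ℕ}
    (f : Fin m → S) (g : Fin n → S)
    (hgf : Ideal.span (Set.range g) ≤ Ideal.span (Set.range f)) (r : ℤ) :
    minorsIdeal (jacobianMatrix D g) r ≤
      minorsIdeal (jacobianMatrix D f) r ⊔ Ideal.span (Set.range f) := by
  choose c hc using fun j =>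
    Ideal.mem_span_range_iff_exists_fun.mp (hgf (Ideal.subset_span (Set.mem_range_self j)))
  rw [minorsIdeal_sup_eq_comap, ← Ideal.map_le_iff_le_comap, Ideal.map_minorsIdeal,
    jacobianMatrix_map_mk_eq_mul D f g c hc]
  exact minorsIdeal_mul_le _ _ r

theorem minorsIdeal_jacobianMatrix_sup_eq (D : Fin l → Derivation R S S) {m n : ℕ}
    {f : Fin m → S} {g : Fin n → S} (h : Ideal.span (Set.range f) = Ideal.span (Set.range g))
    (r : ℤ) :
    minorsIdeal (jacobianMatrix D f) r ⊔ Ideal.span (Set.range f) =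
      minorsIdeal (jacobianMatrix D g) r ⊔ Ideal.span (Set.range f) := by
  apply le_antisymm
  · rw [h]
    exact sup_le (minorsIdeal_jacobianMatrix_le_sup D g f h.le r) le_sup_right
  · exact sup_le (minorsIdeal_jacobianMatrix_le_sup D f g h.ge r) le_sup_right

end Jacobian

theorem psPderiv_eq_pderiv {R : Type} [CommRing R] {l : ℕ} (i : Fin l)
    (f : MvPowerSeries (Fin l) R) : psPderiv i f = MvPowerSeries.pderiv R i f := by
  ext e
  change ((e i + 1 : ℕ) • _ : R) = _
  rw [MvPowerSeries.coeff_pderiv, nsmul_eq_mul, Nat.cast_succ, mul_comm]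

/-- Let `R` be a commutative ring and `S` either the polynomial ring `R[X_1,…,X_l]` or
the power series ring `R⟦X_1,…,X_l⟧`. If `f_1,…,f_m, g_1,…,g_n ∈ S` generate the same
ideal `I`, then `I_r((∂f_j/∂X_i)) + I = I_r((∂g_j/∂X_i)) + I` for every integer `r`. -/
theorem minorsIdeal_jacobi_sup_span_eq_of_span_eq
    (R : Type) [CommRing R] (l : ℕ) (r : ℤ) :
    (∀ (m n : ℕ) (f : Fin m → MvPolynomial (Fin l) R)
      (g : Fin n → MvPolynomial (Fin l) R),
      Ideal.span (Set.range f) = Ideal.span (Set.range g) →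
      minorsIdeal (polyJacobi f) r ⊔ Ideal.span (Set.range f) =
        minorsIdeal (polyJacobi g) r ⊔ Ideal.span (Set.range f)) ∧
    (∀ (m n : ℕ) (f : Fin m → MvPowerSeries (Fin l) R)
      (g : Fin n → MvPowerSeries (Fin l) R),
      Ideal.span (Set.range f) = Ideal.span (Set.range g) →
      minorsIdeal (psJacobi f) r ⊔ Ideal.span (Set.range f) =
        minorsIdeal (psJacobi g) r ⊔ Ideal.span (Set.range f)) := by
  have hps : ∀ {m : ℕ} (f : Fin m → MvPowerSeries (Fin l) R),
      psJacobi f = jacobianMatrix (MvPowerSeries.pderiv R) f := fun f =>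
    Matrix.ext fun i j => psPderiv_eq_pderiv i (f j)
  refine ⟨fun m n f g h => minorsIdeal_jacobianMatrix_sup_eq (MvPolynomial.pderiv ·) h r,
    fun m n f g h => ?_⟩
  rw [hps, hps]
  exact minorsIdeal_jacobianMatrix_sup_eq (MvPowerSeries.pderiv R) h r

end
end
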